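/- arXiv:2209.01792 — 5 statements merged into one kernel-verified Lean document; each statement's English description precedes it below -/
import Mathlib

section
/- In the dimorphic dormancy system with traits x and y, any coordinatewise positive equilibrium (n̂_{x,a}, n̂_{x,d}, n̂_{y,a}, n̂_{y,d}) satisfies α(x,x) n̂_{x,a} + α(x,y) n̂_{y,a} = (λ(x)-μ(x))(κ(x)+σ(x))/(κ(x)+(1-p(x))σ(x)) and α(y,x) n̂_{x,a} + α(y,y) n̂_{y,a} = (λ(y)-μ(y))(κ(y)+σ(y))/(κ(y)+(1-p(y))σ(y)). -/
/-- Any coordinatewise positive equilibrium of the dimorphic dormancy system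
satisfies the two linear relations on the active population sizes. -/
theorem dimorphic_equilibrium_linear_relations
    (lamx lamy mux muy sigx sigy kapx kapy px py : ℝ)
    (axx axy ayx ayy : ℝ)
    (hlx : 0 < lamx) (hly : 0 < lamy) (hmx : 0 ≤ mux) (hmy : 0 ≤ muy)
    (hlmx : mux < lamx) (hlmy : muy < lamy)
    (hsx : 0 < sigx) (hsy : 0 < sigy) (hkx : 0 ≤ kapx) (hky : 0 ≤ kapy)
    (hpx0 : 0 ≤ px) (hpx1 : px < 1) (hpy0 : 0 ≤ py) (hpy1 : py < 1)
    (haxx : 0 < axx) (haxy : 0 < axy) (hayx : 0 < ayx) (hayy : 0 < ayy)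
    (nxa nxd nya nyd : ℝ)
    (hnxa : 0 < nxa) (hnxd : 0 < nxd) (hnya : 0 < nya) (hnyd : 0 < nyd)
    -- equilibrium conditions
    (heq1 : nxa * (lamx - mux - axx * nxa - axy * nya) + sigx * nxd = 0)
    (heq2 : px * nxa * (axx * nxa + axy * nya) - (kapx + sigx) * nxd = 0)
    (heq3 : nya * (lamy - muy - ayx * nxa - ayy * nya) + sigy * nyd = 0)
    (heq4 : py * nya * (ayx * nxa + ayy * nya) - (kapy + sigy) * nyd = 0) :
    axx * nxa + axy * nya
      = (lamx - mux) * (kapx + sigx) / (kapx + (1 - px) * sigx) ∧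
    ayx * nxa + ayy * nya
      = (lamy - muy) * (kapy + sigy) / (kapy + (1 - py) * sigy) := by
  have hdx : 0 < kapx + (1 - px) * sigx := by nlinarith
  have hdy : 0 < kapy + (1 - py) * sigy := by nlinarith
  have hsx' : 0 < kapx + sigx := by linarith
  have hsy' : 0 < kapy + sigy := by linarith
  constructor
  · rw [eq_div_iff (ne_of_gt hdx)]
    have h : nxa * ((axx * nxa + axy * nya) * (kapx + (1 - px) * sigx)
        - (lamx - mux) * (kapx + sigx)) = 0 := by
      linear_combination (-(kapx + sigx)) * heq1 - sigx * heq2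
    have := mul_eq_zero.mp h
    rcases this with h1 | h2
    · exact absurd h1 (ne_of_gt hnxa)
    · linarith
  · rw [eq_div_iff (ne_of_gt hdy)]
    have h : nya * ((ayx * nxa + ayy * nya) * (kapy + (1 - py) * sigy)
        - (lamy - muy) * (kapy + sigy)) = 0 := by
      linear_combination (-(kapy + sigy)) * heq3 - sigy * heq4
    have := mul_eq_zero.mp h
    rcases this with h1 | h2
    · exact absurd h1 (ne_of_gt hnya)
    · linarith
end

section
/- Under the same hypotheses (∂₁α(x,x) = 0 for all x on the diagonal, reading as: for each x, the map y ↦ α(y,x) has a critical point at y = x), the second derivative of the fitness function satisfies ∂₁₁f(x,x) = λ''(x) - ∂₁₁α(x,x)λ(x) + λ(x)α(x,x)p''(x)/(1-p(x)). -/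
/-!
For fixed `x`, the slice `y ↦ f(y,x)` is `λ` minus the constant `λ(x)/(1-p(x))` times the
product `α(·,x)(1-p)`. In Leibniz' rule for the second derivative of that product the cross
term `2 ∂₁α(x,x) (1-p)'(x)` vanishes because `α(·,x)` is critical at `x`.
-/

section SecondDerivative

variable {𝕜 : Type*} [NontriviallyNormedField 𝕜]

theorem deriv_deriv_eq_iteratedDeriv_two {F : Type*} [NormedAddCommGroup F] [NormedSpace 𝕜 F]
    (f : 𝕜 → F) (x : 𝕜) : deriv (deriv f) x = iteratedDeriv 2 f x := by
  rw [iteratedDeriv_succ, iteratedDeriv_one]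

theorem iteratedDeriv_two_fun_mul_of_deriv_eq_zero {𝔸 : Type*} [NormedRing 𝔸] [NormedAlgebra 𝕜 𝔸]
    {a q : 𝕜 → 𝔸} {x : 𝕜} (ha : ContDiffAt 𝕜 2 a x) (hq : ContDiffAt 𝕜 2 q x)
    (hcrit : deriv a x = 0) :
    iteratedDeriv 2 (fun y => a y * q y) x
      = iteratedDeriv 2 a x * q x + a x * iteratedDeriv 2 q x := by
  rw [iteratedDeriv_fun_mul ha hq]
  simp [Finset.sum_range_succ, iteratedDeriv_one, hcrit, add_comm]

end SecondDerivative

theorem second_derivative_fitness_diagonal_general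
    (lam p : ℝ → ℝ) (alpha : ℝ → ℝ → ℝ) (x : ℝ)
    (hlam : ContDiff ℝ 2 lam) (hp : ContDiff ℝ 2 p)
    (halpha : ∀ z : ℝ, ContDiff ℝ 2 (fun y => alpha y z))
    (hp1 : p x < 1)
    (hcrit : ∀ z : ℝ, deriv (fun y => alpha y z) z = 0)
    (f : ℝ → ℝ → ℝ)
    (hf : ∀ y z, f y z = lam y - alpha y z * lam z * (1 - p y) / (1 - p z)) :
    deriv (deriv (fun y => f y x)) x
      = deriv (deriv lam) x - deriv (deriv (fun y => alpha y x)) x * lam x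
        + lam x * alpha x x * deriv (deriv p) x / (1 - p x) := by
  have hsurv_ne : (1 : ℝ) - p x ≠ 0 := by linarith
  have hslice : (fun y => f y x)
      = fun y => lam y - lam x / (1 - p x) * (alpha y x * (1 - p y)) := by
    funext y
    rw [hf]
    field_simp
  have hsurv : ContDiff ℝ 2 (fun y => 1 - p y) := contDiff_const.sub hp
  simp only [deriv_deriv_eq_iteratedDeriv_two, hslice]
  rw [iteratedDeriv_fun_sub hlam.contDiffAt
      (contDiffAt_const.mul ((halpha x).mul hsurv).contDiffAt),
    iteratedDeriv_const_mul_field,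
    iteratedDeriv_two_fun_mul_of_deriv_eq_zero (halpha x).contDiffAt hsurv.contDiffAt (hcrit x),
    iteratedDeriv_const_sub two_pos, iteratedDeriv_neg]
  field_simp
  ring

/-- Second derivative of the invasion fitness
`f(y,x) = λ(y) - α(y,x)λ(x)(1-p(y))/(1-p(x))` along the diagonal:
`∂₁₁f(x,x) = λ''(x) - ∂₁₁α(x,x)λ(x) + λ(x)α(x,x)p''(x)/(1-p(x))`,
assuming that for each `x` the map `y ↦ α(y,x)` has a critical point at `y = x`. -/
theorem second_derivative_fitness_diagonal
    (lam p : ℝ → ℝ) (alpha : ℝ → ℝ → ℝ) (x : ℝ)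
    (hlam : ContDiff ℝ 2 lam) (hp : ContDiff ℝ 2 p)
    (halpha : ∀ z : ℝ, ContDiff ℝ 2 (fun y => alpha y z))
    (hp0 : 0 ≤ p x) (hp1 : p x < 1)
    (hcrit : ∀ z : ℝ, deriv (fun y => alpha y z) z = 0)
    (f : ℝ → ℝ → ℝ)
    (hf : ∀ y z, f y z = lam y - alpha y z * lam z * (1 - p y) / (1 - p z)) :
    deriv (deriv (fun y => f y x)) x
      = deriv (deriv lam) x - deriv (deriv (fun y => alpha y x)) x * lam x
        + lam x * alpha x x * deriv (deriv p) x / (1 - p x) :=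
  second_derivative_fitness_diagonal_general lam p alpha x hlam hp halpha hp1 hcrit f hf
end

section
/- With the Gaussian model (r = 2) as above, ∂₂₂f(0,0) = 1/σ_α² + 1/σ_b² - 1/σ_p², and consequently ∂₂₂f(0,0) > ∂₁₁f(0,0) if and only if 1/σ_b² > 1/σ_p², i.e. exactly when the stability condition σ_p > σ_b holds. -/
open Real

/-! Both slices `x ↦ f 0 x` and `y ↦ f y 0` collapse, after merging the exponentials, to a
difference `exp (c t²) - exp (d t²)`, and `t ↦ exp (c t²)` has second derivative `2c` at `0`. -/

theorem hasDerivAt_exp_mul_sq (c x : ℝ) :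
    HasDerivAt (fun x => exp (c * x ^ 2)) (2 * c * x * exp (c * x ^ 2)) x :=
  (((hasDerivAt_pow 2 x).const_mul c).exp).congr_deriv (by ring)

theorem deriv_exp_mul_sq_sub_exp_mul_sq (c d : ℝ) :
    deriv (fun x => exp (c * x ^ 2) - exp (d * x ^ 2)) =
      fun x => 2 * c * (x * exp (c * x ^ 2)) - 2 * d * (x * exp (d * x ^ 2)) := by
  funext x
  exact (((hasDerivAt_exp_mul_sq c x).sub (hasDerivAt_exp_mul_sq d x)).congr_deriv (by ring)).deriv

theorem hasDerivAt_mul_exp_mul_sq_zero (c : ℝ) :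
    HasDerivAt (fun x => x * exp (c * x ^ 2))  1 0 :=
  ((hasDerivAt_id (0 : ℝ)).mul (hasDerivAt_exp_mul_sq c 0)).congr_deriv (by simp)

theorem deriv_deriv_exp_mul_sq_sub_exp_mul_sq_zero (c d : ℝ) :
    deriv (deriv fun x => exp (c * x ^ 2) - exp (d * x ^ 2)) 0 = 2 * c - 2 * d := by
  rw [deriv_exp_mul_sq_sub_exp_mul_sq]
  exact (((hasDerivAt_mul_exp_mul_sq_zero c).const_mul (2 * c)).sub
    ((hasDerivAt_mul_exp_mul_sq_zero d).const_mul (2 * d))).deriv.trans (by ring)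

theorem gaussian_second_derivative_second_variable_general
    (sb sa sp : ℝ)
    (f : ℝ → ℝ → ℝ)
    (hf : ∀ y x : ℝ, f y x = exp (-(y ^ 2) / (2 * sb ^ 2)) -
      exp (-((y - x) ^ 2) / (2 * sa ^ 2)) * exp (-(x ^ 2) / (2 * sb ^ 2)) *
        exp (-(y ^ 2) / (2 * sp ^ 2)) / exp (-(x ^ 2) / (2 * sp ^ 2))) :
    deriv (deriv (fun x => f 0 x)) 0 = 1 / sa ^ 2 + 1 / sb ^ 2 - 1 / sp ^ 2 ∧
    (deriv (deriv (fun x => f 0 x)) 0 > deriv (deriv (fun y => f y 0)) 0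
      ↔ 1 / sb ^ 2 > 1 / sp ^ 2) := by
  have hslice_x : (fun x => f 0 x) = fun x =>
      exp (0 * x ^ 2) - exp ((-1 / (2 * sa ^ 2) - 1 / (2 * sb ^ 2) + 1 / (2 * sp ^ 2)) * x ^ 2) := by
    funext x
    rw [hf, ← exp_add, ← exp_add, ← exp_sub]
    congr 1 <;> ring_nf
  have hslice_y : (fun y => f y 0) = fun y =>
      exp (-1 / (2 * sb ^ 2) * y ^ 2) - exp ((-1 / (2 * sa ^ 2) - 1 / (2 * sp ^ 2)) * y ^ 2) := by
    funext y
    rw [hf, ← exp_add, ← exp_add, ← exp_sub]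
    congr 1 <;> ring_nf
  have h₂₂ : deriv (deriv (fun x => f 0 x)) 0 = 1 / sa ^ 2 + 1 / sb ^ 2 - 1 / sp ^ 2 := by
    rw [hslice_x, deriv_deriv_exp_mul_sq_sub_exp_mul_sq_zero]
    ring
  have h₁₁ : deriv (deriv (fun y => f y 0)) 0 = 1 / sa ^ 2 - 1 / sb ^ 2 + 1 / sp ^ 2 := by
    rw [hslice_y, deriv_deriv_exp_mul_sq_sub_exp_mul_sq_zero]
    ring
  refine ⟨h₂₂, ?_⟩
  rw [h₂₂, h₁₁]
  constructor <;> intro h <;> linarith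

/-- In the Gaussian model with `r = 2`, `∂₂₂f(0,0) = 1/σ_α² + 1/σ_b² - 1/σ_p²`,
and consequently `∂₂₂f(0,0) > ∂₁₁f(0,0)` iff `1/σ_b² > 1/σ_p²`. -/
theorem gaussian_second_derivative_second_variable
    (sb sa sp : ℝ) (hsb : 0 < sb) (hsa : 0 < sa) (hsp : 0 < sp)
    (f : ℝ → ℝ → ℝ)
    (hf : ∀ y x : ℝ, f y x = exp (-(y ^ 2) / (2 * sb ^ 2)) -
      exp (-((y - x) ^ 2) / (2 * sa ^ 2)) * exp (-(x ^ 2) / (2 * sb ^ 2)) *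
        exp (-(y ^ 2) / (2 * sp ^ 2)) / exp (-(x ^ 2) / (2 * sp ^ 2))) :
    deriv (deriv (fun x => f 0 x)) 0 = 1 / sa ^ 2 + 1 / sb ^ 2 - 1 / sp ^ 2 ∧
    (deriv (deriv (fun x => f 0 x)) 0 > deriv (deriv (fun y => f y 0)) 0
      ↔ 1 / sb ^ 2 > 1 / sp ^ 2) :=
  gaussian_second_derivative_second_variable_general sb sa sp f hf
end

section
/- Consider the symmetric dimorphic system with traits x and -x, μ = 0, α(x,x) = 1, functions λ, p, σ even. Then n₁ᵃ = n₂ᵃ = (λ(x) - μ(x))/((1 + α(-x,x))(1-p(x))) and n₁ᵈ = n₂ᵈ = (λ(x)-μ(x))² p(x)/(σ(x)(1+α(-x,x))(1-p(x))²) is a coordinatewise nonnegative equilibrium of the dimorphic dynamical system. -/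
/-! The active size `n` is pinned down by the balance `(1 - p) (1 + α) n = λ`, and the dormant
size by `σ n_d = p (1 + α) n²`, which is exactly the dormant equation. Adding the two equations
leaves `n (λ - (1 - p) (1 + α) n) = 0`. -/

/-- The symmetric dimorphic equilibrium: with traits `x` and `-x`, `μ = 0`,
`α(x,x) = 1`, the explicit symmetric pair of active/dormant sizes is a
coordinatewise nonnegative equilibrium of the dimorphic system. -/
theorem symmetric_dimorphic_equilibrium
    (lamx px sigx axy : ℝ)
    (hlam : 0 < lamx) (hp0 : 0 ≤ px) (hp1 : px < 1) (hsig : 0 < sigx)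
    (haxy : 0 ≤ axy) :
    let na := lamx / ((1 + axy) * (1 - px))
    let nd := lamx ^ 2 * px / (sigx * (1 + axy) * (1 - px) ^ 2)
    0 ≤ na ∧ 0 ≤ nd ∧
    na * (lamx - na - axy * na) + sigx * nd = 0 ∧
    px * na * (na + axy * na) - sigx * nd = 0 := by
  intro na nd
  have hcomp : 0 < 1 + axy := by linarith
  have hrep : 0 < 1 - px := by linarith
  have hbalance : (1 - px) * ((1 + axy) * na) = lamx := by
    simp only [na]
    field_simp
  have hdormant : sigx * nd = px * (1 + axy) * na ^ 2 := by
    simp only [na, nd]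
    field_simp
  refine ⟨by positivity, by positivity, ?_, ?_⟩
  · linear_combination hdormant - na * hbalance
  · linear_combination -hdormant
end

section
/- In the Gaussian symmetric dimorphic model the equilibrium sizes are n₁ᵃ = e^{-x²/(2σ_b²)+x²/(2σ_p²)}/(1 + e^{-2x²/σ_α²}) and n₁ᵈ = e^{-x²/σ_b²}(1 - e^{-x²/(2σ_p²)})/(σ(1 + e^{-2x²/σ_α²}) e^{-x²/σ_p²}). -/
open Real

/-- In the Gaussian symmetric dimorphic model the equilibrium sizes equal
`n₁ᵃ = e^{-x²/(2σ_b²)+x²/(2σ_p²)}/(1 + e^{-2x²/σ_α²})` and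
`n₁ᵈ = e^{-x²/σ_b²}(1 - e^{-x²/(2σ_p²)})/(σ(1 + e^{-2x²/σ_α²})e^{-x²/σ_p²})`. -/
theorem gaussian_symmetric_dimorphic_equilibrium
    (sb sa sp sigma : ℝ) (hsb : 0 < sb) (hsa : 0 < sa) (hsp : 0 < sp)
    (hsig : 0 < sigma) (x : ℝ)
    (lam p alphmx : ℝ)
    (hlam : lam = exp (-(x ^ 2) / (2 * sb ^ 2)))
    (hp : p = 1 - exp (-(x ^ 2) / (2 * sp ^ 2)))
    (halph : alphmx = exp (-((2 * x) ^ 2) / (2 * sa ^ 2))) :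
    lam / ((1 + alphmx) * (1 - p))
      = exp (-(x ^ 2) / (2 * sb ^ 2) + x ^ 2 / (2 * sp ^ 2))
        / (1 + exp (-(2 * x ^ 2) / sa ^ 2)) ∧
    lam ^ 2 * p / (sigma * (1 + alphmx) * (1 - p) ^ 2)
      = exp (-(x ^ 2) / sb ^ 2) * (1 - exp (-(x ^ 2) / (2 * sp ^ 2)))
        / (sigma * (1 + exp (-(2 * x ^ 2) / sa ^ 2)) * exp (-(x ^ 2) / sp ^ 2)) := by
  have hsa' : (sa : ℝ) ≠ 0 := ne_of_gt hsa
  have hsp' : (sp : ℝ) ≠ 0 := ne_of_gt hsp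
  have hsb' : (sb : ℝ) ≠ 0 := ne_of_gt hsb
  have e1 : -((2 * x) ^ 2) / (2 * sa ^ 2) = -(2 * x ^ 2) / sa ^ 2 := by
    field_simp
  have e2 : exp (-(x ^ 2) / (2 * sb ^ 2)) ^ 2 = exp (-(x ^ 2) / sb ^ 2) := by
    rw [← Real.exp_nat_mul]; congr 1; field_simp; ring
  have e3 : exp (-(x ^ 2) / (2 * sp ^ 2)) ^ 2 = exp (-(x ^ 2) / sp ^ 2) := by
    rw [← Real.exp_nat_mul]; congr 1; field_simp; ring
  have e4 : exp (-(x ^ 2) / (2 * sb ^ 2) + x ^ 2 / (2 * sp ^ 2))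
      = exp (-(x ^ 2) / (2 * sb ^ 2)) / exp (-(x ^ 2) / (2 * sp ^ 2)) := by
    rw [← Real.exp_sub]; congr 1; ring
  subst hlam hp halph
  rw [e1]
  constructor
  · rw [e4, show (1 : ℝ) - (1 - exp (-(x ^ 2) / (2 * sp ^ 2))) = exp (-(x ^ 2) / (2 * sp ^ 2)) from by ring]
    rw [div_div]
    ring
  · rw [show (1 : ℝ) - (1 - exp (-(x ^ 2) / (2 * sp ^ 2))) = exp (-(x ^ 2) / (2 * sp ^ 2)) from by ring,
      e2, e3]
end
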